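/- For every unsatisfiable SAT instance ψ with n > 2 variables and every r ≥ 2, the minimum length of a synchronizing word for the iterated construction A_r(ψ) is strictly greater than r(n − 1). -/

import Mathlib

/-!
A word resetting `A_{k+3}(ψ)` must make every pair `(q, ·)` leave the top layer, by falling into
`z₀` or by dropping to its second component; a pair that drops after `t` letters leaves the rest
of the word to reset `A_{k+2}(ψ)`, so it suffices to find one that drops only after `n - 1`
letters. On `A₂(ψ)` such a drop lands in `q_{m+1,1}`, which then needs `n + 1` more letters to die.

To find a late drop, start from a prefix after which every `q_{i,1}` carries a live pair and
follow the pair at `q_{m+1,1}` along the next maximal run of `a`'s and `b`'s. It drops at the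
`(n+1)`-st letter of a long run, or at the `c` ending a shorter nonempty run; it survives a run
ending the word, which is impossible; and it dies at the `c` after a run of exactly `n` letters,
but then the run encodes an assignment, which falsifies some clause `c_i`, and the pair sitting at
`q_{i,1}` climbs along the run and drops at that `c`. A drop at a `c` that is not late comes
within the first `n + 1` letters, so the states `p_{i,j}` put live pairs on every `q_{i,1}` again
right after it, and the argument restarts there.
-/

/-- The three-letter alphabet {a, b, c}. -/
inductive Letter3 where
  | a | b | c
deriving DecidableEq

/-- Extension of a transition function to words (left-to-right action). -/
def runW {Q A : Type*} (δ : Q → A → Q) : Q → List A → Q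
  | q, [] => q
  | q, x :: w => runW δ (δ q x) w

/-- States of Berlinkov's automaton A(ψ) for a SAT instance with m clauses and n
variables.  `q i j` encodes q_{i+1,j+1} (so `q ⟨m⟩ ⟨n⟩` is the state z₁),
`p i j` encodes p_{i+1,j+1}, and `z0` is the zero state. -/
inductive St (m n : ℕ) where
  | q : Fin (m + 1) → Fin (n + 1) → St m n
  | p : Fin (m + 1) → Fin (n + 1) → St m n
  | z0 : St m n
deriving DecidableEq

/-- The transition function of Berlinkov's automaton A(ψ).  `pos i j` means the
literal x_{j+1} occurs in clause c_{i+1}; `neg i j` means ¬x_{j+1} occurs there. -/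
def St.delta {m n : ℕ} (pos neg : Fin m → Fin n → Bool) : St m n → Letter3 → St m n
  | .q i j, .a =>
      if hj : (j : ℕ) < n then
        if hi : (i : ℕ) < m then
          if pos ⟨i, hi⟩ ⟨j, hj⟩ then .z0 else .q i ⟨(j : ℕ) + 1, by omega⟩
        else .q i ⟨(j : ℕ) + 1, by omega⟩
      else if (i : ℕ) < m then .z0 else .q i ⟨0, by omega⟩
  | .q i j, .b =>
      if hj : (j : ℕ) < n then
        if hi : (i : ℕ) < m then
          if neg ⟨i, hi⟩ ⟨j, hj⟩ then .z0 else .q i ⟨(j : ℕ) + 1, by omega⟩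
        else .q i ⟨(j : ℕ) + 1, by omega⟩
      else if (i : ℕ) < m then .z0 else .q i ⟨0, by omega⟩
  | .q i j, .c =>
      if (j : ℕ) < n then .q i ⟨0, by omega⟩
      else if (i : ℕ) < m then .q ⟨m, by omega⟩ ⟨0, by omega⟩ else .z0
  | .p i j, x =>
      if hj : (j : ℕ) < n then .p i ⟨(j : ℕ) + 1, by omega⟩
      else match x with
        | .c => .q i ⟨0, by omega⟩
        | _ => .z0
  | .z0, _ => .z0

/-- Clause c_{i+1} is satisfied by the truth assignment τ. -/
def clauseSat {m n : ℕ} (pos neg : Fin m → Fin n → Bool) (τ : Fin n → Bool) (i : Fin m) : Prop :=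
  ∃ j : Fin n, (pos i j = true ∧ τ j = true) ∨ (neg i j = true ∧ τ j = false)

/-- The word v(τ) ∈ {a,b}ⁿ encoding a truth assignment. -/
def encWord {n : ℕ} (τ : Fin n → Bool) : List Letter3 :=
  List.ofFn fun j : Fin n => if τ j then Letter3.a else Letter3.b

/-- Nonzero states of the base automaton A₂(ψ) = A(ψ). -/
abbrev St' (m n : ℕ) := {s : St m n // s ≠ St.z0}

/-- State sets of the iterated construction: `QIter m n k` is the state set of
A_{k+2}(ψ), so `QIter m n 0 = Q₂` and `Q_{r} = Q_{r-1} ⊕ (Q₂ \ {z₀}) × Q_{r-1}`. -/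
def QIter (m n : ℕ) : ℕ → Type
  | 0 => St m n
  | k + 1 => QIter m n k ⊕ (St' m n × QIter m n k)

/-- The zero state of A_{k+2}(ψ). -/
def z0Iter (m n : ℕ) : (k : ℕ) → QIter m n k
  | 0 => St.z0
  | k + 1 => Sum.inl (z0Iter m n k)

/-- The set {q_{i,n+1} : i ≤ m} ∪ {q_{m+1,j} : 2 ≤ j ≤ n} ∪ {z₁} of states whose
pairs drop to the second component when mapped to q_{m+1,1}. -/
def dropSet {m n : ℕ} : St m n → Prop
  | St.q i j => ((i : ℕ) < m ∧ (j : ℕ) = n) ∨ ((i : ℕ) = m ∧ 1 ≤ (j : ℕ))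
  | _ => False

instance {m n : ℕ} : DecidablePred (dropSet (m := m) (n := n)) := by
  intro s
  cases s <;> simp only [dropSet] <;> infer_instance

/-- The transition function δ_r of the iterated construction A_{k+2}(ψ). -/
def deltaIter {m n : ℕ} (pos neg : Fin m → Fin n → Bool) :
    (k : ℕ) → QIter m n k → Letter3 → QIter m n k
  | 0, s, d => St.delta pos neg s d
  | k + 1, Sum.inl s, d => Sum.inl (deltaIter pos neg k s d)
  | k + 1, Sum.inr (q', q''), d =>
      if ht : St.delta pos neg q'.val d = St.z0 then
        Sum.inl (z0Iter m n k)
      else if St.delta pos neg q'.val d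
            = St.q ⟨m, Nat.lt_succ_self m⟩ ⟨0, Nat.succ_pos n⟩ ∧ dropSet q'.val then
        Sum.inl q''
      else
        Sum.inr (⟨St.delta pos neg q'.val d, ht⟩, q'')

namespace Berlinkov

variable {m n : ℕ} (pos neg : Fin m → Fin n → Bool)

theorem deltaIter_z0Iter (k : ℕ) (d : Letter3) :
    deltaIter pos neg k (z0Iter m n k) d = z0Iter m n k := by
  induction k with
  | zero => rfl
  | succ k ih => exact congrArg Sum.inl ih

theorem runW_z0Iter (k : ℕ) (w : List Letter3) :
    runW (deltaIter pos neg k) (z0Iter m n k) w = z0Iter m n k := by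
  induction w with
  | nil => rfl
  | cons d w ih => rw [runW, deltaIter_z0Iter, ih]

theorem runW_deltaIter_inl (k : ℕ) (s : QIter m n k) (w : List Letter3) :
    runW (deltaIter pos neg (k + 1)) (.inl s) w = .inl (runW (deltaIter pos neg k) s w) := by
  induction w generalizing s with
  | nil => rfl
  | cons d w ih => exact ih _

def St'.q (i : Fin (m + 1)) (j : Fin (n + 1)) : St' m n := ⟨.q i j, nofun⟩

def St'.p (i : Fin (m + 1)) (j : Fin (n + 1)) : St' m n := ⟨.p i j, nofun⟩

/-- How a pair `(q, ·)` of `A_{k+3}(ψ)` ends up after a word, which depends only on `q`: it is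
still a pair with first component `q'`, it has fallen into `z₀`, or it has dropped to its second
component with the suffix `v` still to be read. -/
inductive PairFate (m n : ℕ)
  | alive (q : St' m n)
  | dead
  | dropped (v : List Letter3)

def pairFate : St' m n → List Letter3 → PairFate m n
  | q, [] => .alive q
  | q, d :: w =>
    if h : St.delta pos neg q.1 d = .z0 then .dead
    else if St.delta pos neg q.1 d = .q (Fin.last m) 0 ∧ dropSet q.1 then .dropped w
    else pairFate ⟨_, h⟩ w

def PairFate.baseImage : PairFate m n → St m n
  | .alive q => q.1
  | .dead => .z0
  | .dropped v => runW (St.delta pos neg) (.q (Fin.last m) 0) v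

def PairFate.iterImage {k : ℕ} (x : QIter m n k) : PairFate m n → QIter m n (k + 1)
  | .alive q => .inr (q, x)
  | .dead => z0Iter m n (k + 1)
  | .dropped v => .inl (runW (deltaIter pos neg k) x v)

theorem runW_delta_eq_baseImage (q : St' m n) (w : List Letter3) :
    runW (St.delta pos neg) q.1 w = (pairFate pos neg q w).baseImage pos neg := by
  induction w generalizing q with
  | nil => rfl
  | cons d w ih =>
    simp only [runW, pairFate]
    split_ifs with hz hdrop
    · rw [hz]; exact runW_z0Iter pos neg 0 w
    · rw [hdrop.1]; rfl
    · exact ih ⟨_, hz⟩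

theorem runW_deltaIter_inr {k : ℕ} (q : St' m n) (x : QIter m n k) (w : List Letter3) :
    runW (deltaIter pos neg (k + 1)) (.inr (q, x)) w
      = (pairFate pos neg q w).iterImage pos neg x := by
  induction w generalizing q with
  | nil => rfl
  | cons d w ih =>
    simp only [runW, pairFate]
    by_cases hz : St.delta pos neg q.1 d = .z0
    · have hstep : deltaIter pos neg (k + 1) (.inr (q, x)) d = z0Iter m n (k + 1) := dif_pos hz
      rw [hstep, dif_pos hz]
      exact runW_z0Iter pos neg (k + 1) w
    by_cases hdrop : St.delta pos neg q.1 d = .q (Fin.last m) 0 ∧ dropSet q.1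
    · have hstep : deltaIter pos neg (k + 1) (.inr (q, x)) d = .inl x :=
        (dif_neg hz).trans (if_pos hdrop)
      rw [hstep, dif_neg hz, if_pos hdrop]
      exact runW_deltaIter_inl pos neg k x w
    · have hstep : deltaIter pos neg (k + 1) (.inr (q, x)) d = .inr (⟨_, hz⟩, x) :=
        (dif_neg hz).trans (if_neg hdrop)
      rw [hstep, dif_neg hz, if_neg hdrop]
      exact ih ⟨_, hz⟩

theorem pairFate_append_of_alive {q q' : St' m n} {u : List Letter3}
    (h : pairFate pos neg q u = .alive q') (v : List Letter3) :
    pairFate pos neg q (u ++ v) = pairFate pos neg q' v := by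
  induction u generalizing q with
  | nil => cases h; rfl
  | cons d u ih =>
    simp only [pairFate, List.cons_append] at h ⊢
    split_ifs at h ⊢
    exact ih h

theorem pairFate_cons_of_step {q q' : St' m n} {d : Letter3}
    (hstep : St.delta pos neg q.1 d = q'.1) (hdrop : ¬ (q'.1 = .q (Fin.last m) 0 ∧ dropSet q.1))
    (w : List Letter3) : pairFate pos neg q (d :: w) = pairFate pos neg q' w := by
  have hz : St.delta pos neg q.1 d ≠ .z0 := hstep ▸ q'.2
  rw [pairFate, dif_neg hz, if_neg (hstep ▸ hdrop)]
  exact congrArg (pairFate pos neg · w) (Subtype.ext hstep)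

theorem pairFate_cons_of_drop {q : St' m n} {d : Letter3}
    (hstep : St.delta pos neg q.1 d = .q (Fin.last m) 0) (hdrop : dropSet q.1) (w : List Letter3) :
    pairFate pos neg q (d :: w) = .dropped w := by
  rw [pairFate, dif_neg (by rw [hstep]; nofun), if_pos ⟨hstep, hdrop⟩]

theorem pairFate_lastRow {x : List Letter3} (hx : ∀ d ∈ x, d ≠ .c) (j : Fin (n + 1))
    (hj : j + x.length ≤ n) :
    pairFate pos neg (St'.q (Fin.last m) j) x
      = .alive (St'.q (Fin.last m) ⟨j + x.length, by omega⟩) := by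
  induction x generalizing j with
  | nil => rfl
  | cons d x ih =>
    simp only [List.length_cons] at hj
    rw [pairFate_cons_of_step pos neg (q' := St'.q (Fin.last m) ⟨j + 1, by omega⟩),
      ih (fun e he => hx e (.tail _ he)) _ (by simp; omega)]
    · simp only [List.length_cons, Nat.add_assoc, Nat.add_comm 1]
    · have := hx d (.head _)
      have hjn : (j : ℕ) < n := by omega
      cases d <;> simp_all [St.delta, St'.q]
    · simp [St'.q]

theorem pairFate_lastRow_last_cons (hn : 0 < n) {d : Letter3} (hd : d ≠ .c) (w : List Letter3) :
    pairFate pos neg (St'.q (Fin.last m) (Fin.last n)) (d :: w) = .dropped w :=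
  pairFate_cons_of_drop pos neg (by cases d <;> simp_all [St.delta, St'.q])
    (by simp [St'.q, dropSet]; omega) w

theorem pairFate_lastRow_cons_c (j : ℕ) (hj0 : 0 < j) (hjn : j < n) (w : List Letter3) :
    pairFate pos neg (St'.q (Fin.last m) ⟨j, by omega⟩) (.c :: w) = .dropped w :=
  pairFate_cons_of_drop pos neg (by simp [St.delta, St'.q, hjn])
    (by simp [St'.q, dropSet]; omega) w

theorem pairFate_clauseRow_last_cons_c (i : Fin m) (w : List Letter3) :
    pairFate pos neg (St'.q i.castSucc (Fin.last n)) (.c :: w) = .dropped w :=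
  pairFate_cons_of_drop pos neg (by simp [St.delta, St'.q]; rfl) (by simp [St'.q, dropSet]) w

theorem pairFate_q_zero_c (hn : 0 < n) (i : Fin (m + 1)) :
    pairFate pos neg (St'.q i 0) [.c] = .alive (St'.q i 0) := by
  rw [pairFate_cons_of_step pos neg (q' := St'.q i 0)]
  · rfl
  · simp [St.delta, St'.q, hn]
  · simp [St'.q, dropSet]; omega

theorem pairFate_p_last_c (i : Fin (m + 1)) :
    pairFate pos neg (St'.p i (Fin.last n)) [.c] = .alive (St'.q i 0) := by
  rw [pairFate_cons_of_step pos neg (q' := St'.q i 0)]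
  · rfl
  · simp [St.delta, St'.p, St'.q]
  · simp [St'.p, dropSet]

theorem pairFate_p (i : Fin (m + 1)) (x : List Letter3) (j : Fin (n + 1))
    (hj : j + x.length ≤ n) :
    pairFate pos neg (St'.p i j) x = .alive (St'.p i ⟨j + x.length, by omega⟩) := by
  induction x generalizing j with
  | nil => rfl
  | cons d x ih =>
    simp only [List.length_cons] at hj
    rw [pairFate_cons_of_step pos neg (q' := St'.p i ⟨j + 1, by omega⟩), ih _ (by simp; omega)]
    · simp only [List.length_cons, Nat.add_assoc, Nat.add_comm 1]
    · have hjn : (j : ℕ) < n := by omega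
      cases d <;> simp [St.delta, St'.p, hjn]
    · simp [St'.p]

theorem pairFate_encWord {τ : Fin n → Bool} {i : Fin m} (hi : ¬ clauseSat pos neg τ i) :
    pairFate pos neg (St'.q i.castSucc 0) (encWord τ)
      = .alive (St'.q i.castSucc (Fin.last n)) := by
  suffices h : ∀ j (hj : j ≤ n), pairFate pos neg (St'.q i.castSucc 0) ((encWord τ).take j)
      = .alive (St'.q i.castSucc ⟨j, by omega⟩) by
    have := h n le_rfl
    rwa [List.take_of_length_le (by simp [encWord])] at this
  intro j hj
  induction j with
  | zero => rfl
  | succ j ih =>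
    rw [List.take_add_one, pairFate_append_of_alive pos neg (ih (by omega))]
    simp only [encWord, List.getElem?_ofFn, dif_pos (show j < n by omega), Option.toList_some]
    rw [pairFate_cons_of_step pos neg (q' := St'.q i.castSucc ⟨j + 1, by omega⟩)]
    · rfl
    · have hlit := fun h => hi ⟨⟨j, hj⟩, h⟩
      have hjn : j < n := by omega
      cases hτ : τ ⟨j, hj⟩ <;> simp_all [St.delta, St'.q]
    · simp [St'.q]

theorem delta_lastRow (j : Fin (n + 1)) (d : Letter3) :
    (St.delta pos neg (.q (Fin.last m) j) d = .z0 ∧ (j : ℕ) = n) ∨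
      ∃ j' : Fin (n + 1), (j' : ℕ) ≤ j + 1 ∧
        St.delta pos neg (.q (Fin.last m) j) d = .q (Fin.last m) j' := by
  obtain ⟨j, hj⟩ := j
  by_cases hjn : j < n
  · right
    cases d
    · exact ⟨⟨j + 1, by omega⟩, le_rfl, by simp [St.delta, hjn]⟩
    · exact ⟨⟨j + 1, by omega⟩, le_rfl, by simp [St.delta, hjn]⟩
    · exact ⟨0, by simp, by simp [St.delta, hjn]⟩
  · cases d
    · exact .inr ⟨0, by simp, by simp [St.delta, hjn]⟩
    · exact .inr ⟨0, by simp, by simp [St.delta, hjn]⟩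
    · exact .inl ⟨by simp [St.delta, hjn], by simp; omega⟩

theorem sub_lt_length_of_runW_lastRow (j : Fin (n + 1)) (v : List Letter3)
    (h : runW (St.delta pos neg) (.q (Fin.last m) j) v = .z0) : n - j < v.length := by
  induction v generalizing j with
  | nil => cases h
  | cons d v ih =>
    simp only [runW, List.length_cons] at h ⊢
    rcases delta_lastRow pos neg j d with ⟨-, hjn⟩ | ⟨j', hj', hstep⟩
    · omega
    · have := ih j' (hstep ▸ h)
      omega

theorem exists_encWord_eq {x : List Letter3} (hx : ∀ d ∈ x, d ≠ .c) (hlen : x.length = n) :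
    ∃ τ : Fin n → Bool, encWord τ = x := by
  refine ⟨fun j => x[(j : ℕ)]'(by omega) = .a,
    List.ext_getElem (by simp [encWord, hlen]) fun j _ h => ?_⟩
  have hab : x[j] = .a ∨ x[j] = .b := by
    have hc := hx x[j] (List.getElem_mem h)
    revert hc
    generalize x[j] = d
    cases d <;> simp
  rcases hab with hxj | hxj <;> simp [encWord, hxj]

theorem exists_eq_abRun_append (w : List Letter3) :
    ∃ x r, w = x ++ r ∧ (∀ d ∈ x, d ≠ .c) ∧ (r = [] ∨ ∃ r', r = .c :: r') := by
  induction w with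
  | nil => exact ⟨[], [], rfl, by simp, .inl rfl⟩
  | cons d w ih =>
    by_cases hd : d = .c
    · exact ⟨[], d :: w, rfl, by simp, .inr ⟨w, hd ▸ rfl⟩⟩
    · obtain ⟨x, r, rfl, hx, hr⟩ := ih
      exact ⟨d :: x, r, rfl, by simpa [hd] using hx, hr⟩

theorem pairFate_lastRow_of_length_lt (hn : 0 < n) {x : List Letter3} (hx : ∀ d ∈ x, d ≠ .c)
    (hlen : n < x.length) (r : List Letter3) :
    ∃ v, pairFate pos neg (St'.q (Fin.last m) 0) (x ++ r) = .dropped v ∧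
      v.length + (n + 1) = x.length + r.length := by
  obtain ⟨x₁, d, x₂, rfl, hx₁⟩ :
      ∃ x₁ d x₂, x = x₁ ++ d :: x₂ ∧ x₁.length = n :=
    ⟨x.take n, x[n], x.drop (n + 1),
      by rw [← List.drop_eq_getElem_cons hlen, List.take_append_drop],
      List.length_take_of_le hlen.le⟩
  refine ⟨x₂ ++ r, ?_, by simp; omega⟩
  have hclimb := pairFate_lastRow pos neg (fun e he => hx e (List.mem_append_left _ he)) 0
    (by simp [hx₁])
  rw [List.append_assoc, List.cons_append, pairFate_append_of_alive pos neg hclimb]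
  simp only [Fin.val_zero, Nat.zero_add, hx₁]
  exact pairFate_lastRow_last_cons pos neg hn (hx d (by simp)) _

theorem pairFate_lastRow_append_c {x : List Letter3} (hx : ∀ d ∈ x, d ≠ .c) (hx₀ : x ≠ [])
    (hlen : x.length < n) (r : List Letter3) :
    pairFate pos neg (St'.q (Fin.last m) 0) (x ++ .c :: r) = .dropped r := by
  have hclimb := pairFate_lastRow pos neg hx 0 (by rw [Fin.val_zero]; omega)
  rw [pairFate_append_of_alive pos neg hclimb]
  exact pairFate_lastRow_cons_c pos neg _ (by simpa [List.length_pos_iff] using hx₀)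
    (by simpa using hlen) r

theorem exists_pairFate_clauseRow_append_c
    (hunsat : ∀ τ : Fin n → Bool, ∃ i : Fin m, ¬ clauseSat pos neg τ i)
    {x : List Letter3} (hx : ∀ d ∈ x, d ≠ .c) (hlen : x.length = n) (r : List Letter3) :
    ∃ i : Fin m, pairFate pos neg (St'.q i.castSucc 0) (x ++ .c :: r) = .dropped r := by
  obtain ⟨τ, rfl⟩ := exists_encWord_eq hx hlen
  obtain ⟨i, hi⟩ := hunsat τ
  exact ⟨i, by rw [pairFate_append_of_alive pos neg (pairFate_encWord pos neg hi),
    pairFate_clauseRow_last_cons_c]⟩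

def Ready (u : List Letter3) : Prop :=
  ∀ i : Fin (m + 1), ∃ q : St' m n, pairFate pos neg q u = .alive (St'.q i 0)

theorem ready_nil : Ready pos neg [] := fun i => ⟨St'.q i 0, rfl⟩

theorem Ready.append_c (hn : 0 < n) {u : List Letter3} (hu : Ready pos neg u) :
    Ready pos neg (u ++ [.c]) := fun i =>
  let ⟨q, hq⟩ := hu i
  ⟨q, by rw [pairFate_append_of_alive pos neg hq, pairFate_q_zero_c pos neg hn]⟩

theorem ready_append_c {u : List Letter3} (hu : u.length ≤ n) : Ready pos neg (u ++ [.c]) :=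
  fun i => ⟨St'.p i ⟨n - u.length, by omega⟩, by
    rw [pairFate_append_of_alive pos neg (pairFate_p pos neg i u _ (by simp; omega))]
    convert pairFate_p_last_c pos neg i using 3
    exact Fin.ext (by simp; omega)⟩

theorem exists_late_drop_of_ready (hn : 0 < n)
    (hunsat : ∀ τ : Fin n → Bool, ∃ i : Fin m, ¬ clauseSat pos neg τ i) {w : List Letter3}
    (hcollapse : ∀ q q', pairFate pos neg q w ≠ .alive q') (u w' : List Letter3)
    (hw : w = u ++ w') (hu : Ready pos neg u) :
    ∃ q v, pairFate pos neg q w = .dropped v ∧ v.length + (n - 1) ≤ w.length := by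
  induction hlen : w'.length using Nat.strong_induction_on generalizing u w' with
  | _ N ih =>
    subst hw hlen
    obtain ⟨x, r, rfl, hx, hr⟩ := exists_eq_abRun_append w'
    obtain ⟨q, hq⟩ := hu (Fin.last m)
    have hfate := pairFate_append_of_alive pos neg hq
    rcases lt_or_ge n x.length with hlong | hshort
    · obtain ⟨v, hv, hvlen⟩ := pairFate_lastRow_of_length_lt pos neg hn hx hlong r
      exact ⟨q, v, by rw [hfate, hv], by simp; omega⟩
    rcases hr with rfl | ⟨r, rfl⟩
    · have hclimb := pairFate_lastRow pos neg hx 0 (by rw [Fin.val_zero]; omega)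
      exact (hcollapse q _ (by rw [List.append_nil, hfate, hclimb])).elim
    rcases hshort.lt_or_eq with hlt | heq
    · obtain hready | hlate : Ready pos neg (u ++ x ++ [.c]) ∨
          ∃ q v, pairFate pos neg q (u ++ (x ++ .c :: r)) = .dropped v ∧
            v.length + (n - 1) ≤ (u ++ (x ++ .c :: r)).length := by
        by_cases hx₀ : x = []
        · subst hx₀
          simpa using Or.inl (hu.append_c pos neg hn)
        by_cases hux : (u ++ x).length ≤ n
        · exact .inl (ready_append_c pos neg hux)
        · refine .inr ⟨q, r, ?_, by simp at hux ⊢; omega⟩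
          rw [hfate, pairFate_lastRow_append_c pos neg hx hx₀ hlt]
      · exact ih r.length (by simp only [List.length_append, List.length_cons]; omega)
          (u ++ x ++ [.c]) r (by simp) hready rfl
      · exact hlate
    · obtain ⟨i, hi⟩ := exists_pairFate_clauseRow_append_c pos neg hunsat hx heq r
      obtain ⟨q', hq'⟩ := hu i.castSucc
      exact ⟨q', r, by rw [pairFate_append_of_alive pos neg hq', hi], by simp; omega⟩

theorem exists_late_drop (hn : 0 < n)
    (hunsat : ∀ τ : Fin n → Bool, ∃ i : Fin m, ¬ clauseSat pos neg τ i) {w : List Letter3}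
    (hcollapse : ∀ q q', pairFate pos neg q w ≠ .alive q') :
    ∃ q v, pairFate pos neg q w = .dropped v ∧ v.length + (n - 1) ≤ w.length :=
  exists_late_drop_of_ready pos neg hn hunsat hcollapse [] w rfl (ready_nil pos neg)

def ResetsToZero (k : ℕ) (w : List Letter3) : Prop :=
  ∀ s : QIter m n k, runW (deltaIter pos neg k) s w = z0Iter m n k

theorem resetsToZero_of_sync {k : ℕ} {w : List Letter3}
    (hw : ∃ p : QIter m n k, ∀ s, runW (deltaIter pos neg k) s w = p) :
    ResetsToZero pos neg k w := by
  obtain ⟨p, hp⟩ := hw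
  intro s
  rw [hp, ← hp (z0Iter m n k), runW_z0Iter]

theorem ResetsToZero.two_mul_le_length (hn : 0 < n)
    (hunsat : ∀ τ : Fin n → Bool, ∃ i : Fin m, ¬ clauseSat pos neg τ i) {w : List Letter3}
    (hw : ResetsToZero pos neg 0 w) : 2 * n ≤ w.length := by
  have hbase (q : St' m n) : (pairFate pos neg q w).baseImage pos neg = .z0 :=
    (runW_delta_eq_baseImage pos neg q w).symm.trans (hw q.1)
  obtain ⟨q, v, hv, hlen⟩ := exists_late_drop pos neg hn hunsat (w := w) fun q q' h => q'.2 (by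
    simpa only [h, PairFate.baseImage] using hbase q)
  have hdie := sub_lt_length_of_runW_lastRow pos neg 0 v
    (by simpa only [hv, PairFate.baseImage] using hbase q)
  rw [Fin.val_zero, Nat.sub_zero] at hdie
  omega

theorem ResetsToZero.exists_of_succ (hn : 0 < n)
    (hunsat : ∀ τ : Fin n → Bool, ∃ i : Fin m, ¬ clauseSat pos neg τ i) {k : ℕ}
    {w : List Letter3} (hw : ResetsToZero pos neg (k + 1) w) :
    ∃ v, ResetsToZero pos neg k v ∧ v.length + (n - 1) ≤ w.length := by
  have hiter (q : St' m n) (x : QIter m n k) :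
      (pairFate pos neg q w).iterImage pos neg x = .inl (z0Iter m n k) :=
    (runW_deltaIter_inr pos neg q x w).symm.trans (hw (.inr (q, x)))
  obtain ⟨q, v, hv, hlen⟩ := exists_late_drop pos neg hn hunsat (w := w) fun q q' h => by
    simpa [h, PairFate.iterImage] using hiter q (z0Iter m n k)
  exact ⟨v, fun x => Sum.inl_injective (by rw [← hiter q x, hv]; rfl), hlen⟩

end Berlinkov

/-- For every unsatisfiable ψ with n > 2 variables and every r ≥ 2 (here r = k+2),
every synchronizing word of the iterated automaton A_r(ψ) has length strictly
greater than r(n−1). -/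
theorem iterated_unsat_lower_bound
    {m n : ℕ} (hn : 2 < n) (pos neg : Fin m → Fin n → Bool)
    (hunsat : ∀ τ : Fin n → Bool, ∃ i : Fin m, ¬ clauseSat pos neg τ i)
    (k : ℕ) (w : List Letter3)
    (hw : ∃ p : QIter m n k, ∀ s : QIter m n k, runW (deltaIter pos neg k) s w = p) :
    (k + 2) * (n - 1) < w.length := by
  replace hw := Berlinkov.resetsToZero_of_sync pos neg hw
  induction k generalizing w with
  | zero =>
    have := hw.two_mul_le_length pos neg (by omega) hunsat
    omega
  | succ k ih =>
    obtain ⟨v, hv, hlen⟩ := hw.exists_of_succ pos neg (by omega) hunsat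
    have := ih v hv
    have : (k + 1 + 2) * (n - 1) = (k + 2) * (n - 1) + (n - 1) := by ring
    omega
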